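/- arXiv:2108.09733 — 5 statements merged into one kernel-verified Lean document; each statement's English description precedes it below -/
import Mathlib

section
/- For every odd n = 2k+1 and p in [0,1], the majority-vote error satisfies L(p,n) - L(p,n+2) = C(n,k) * (2p-1)^2 * p^{k+1} * (1-p)^{k+1}, which is nonnegative; hence L(p,n) is monotone nonincreasing in n along odd values. -/
/-- The expected majority-vote error `L(p, n)` for `n = 2k+1` i.i.d. Bernoulli(p) labels
predicting a further independent Bernoulli(p) label. -/
noncomputable def majErr (k : ℕ) (p : ℝ) : ℝ :=
  ∑ i ∈ Finset.range (k + 1),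
      (Nat.choose (2 * k + 1) i : ℝ) * p ^ (i + 1) * (1 - p) ^ (2 * k + 1 - i)
    + ∑ i ∈ Finset.range (k + 1),
      (Nat.choose (2 * k + 1) i : ℝ) * p ^ (2 * k + 1 - i) * (1 - p) ^ (i + 1)

noncomputable def Bsum (m j : ℕ) (p : ℝ) : ℝ :=
  ∑ i ∈ Finset.range (j + 1), (m.choose i : ℝ) * p ^ i * (1 - p) ^ (m - i)

lemma Bsum_succ (m j : ℕ) (p : ℝ) :
    Bsum m (j + 1) p = Bsum m j p + (m.choose (j + 1) : ℝ) * p ^ (j + 1) * (1 - p) ^ (m - (j + 1)) := by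
  simp [Bsum, Finset.sum_range_succ]

lemma Bsum_step (p : ℝ) (m : ℕ) : ∀ j, j ≤ m →
    Bsum (m + 1) j p = Bsum m j p - (m.choose j : ℝ) * p ^ (j + 1) * (1 - p) ^ (m - j) := by
  intro j
  induction j with
  | zero =>
      intro _
      simp [Bsum, Finset.sum_range_one, pow_succ]
      ring
  | succ j ih =>
      intro h
      have hj : j ≤ m := Nat.le_of_succ_le h
      obtain ⟨s, hs⟩ : ∃ s, m - (j + 1) = s := ⟨_, rfl⟩
      have h1 : m - j = s + 1 := by omega
      have h2 : m + 1 - (j + 1) = s + 1 := by omega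
      rw [Bsum_succ, Bsum_succ, ih hj, Nat.choose_succ_succ, h1, h2, hs]
      push_cast
      ring

lemma sum_all (k : ℕ) (p : ℝ) :
    ∑ i ∈ Finset.range (2 * k + 2), ((2 * k + 1).choose i : ℝ) * p ^ i * (1 - p) ^ (2 * k + 1 - i) = 1 := by
  have h := add_pow p (1 - p) (2 * k + 1)
  have hp1 : p + (1 - p) = 1 := by ring
  rw [hp1, one_pow] at h
  calc ∑ i ∈ Finset.range (2 * k + 2), ((2 * k + 1).choose i : ℝ) * p ^ i * (1 - p) ^ (2 * k + 1 - i)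
      = ∑ i ∈ Finset.range (2 * k + 1 + 1), p ^ i * (1 - p) ^ (2 * k + 1 - i) * ((2 * k + 1).choose i : ℝ) :=
        Finset.sum_congr rfl fun i _ => by ring
    _ = 1 := h.symm

lemma majErr_eq (k : ℕ) (p : ℝ) :
    majErr k p = p * Bsum (2 * k + 1) k p + (1 - p) * (1 - Bsum (2 * k + 1) k p) := by
  have h1 : ∑ i ∈ Finset.range (k + 1),
      ((2 * k + 1).choose i : ℝ) * p ^ (i + 1) * (1 - p) ^ (2 * k + 1 - i)
      = p * Bsum (2 * k + 1) k p := by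
    rw [Bsum, Finset.mul_sum]
    exact Finset.sum_congr rfl fun i _ => by ring
  have h2 : ∑ i ∈ Finset.range (k + 1),
      ((2 * k + 1).choose i : ℝ) * p ^ (2 * k + 1 - i) * (1 - p) ^ (i + 1)
      = (1 - p) * (1 - Bsum (2 * k + 1) k p) := by
    have hg : ∀ g : ℕ → ℝ,
        (g = fun i => ((2 * k + 1).choose i : ℝ) * p ^ i * (1 - p) ^ (2 * k + 1 - i)) →
        ∑ i ∈ Finset.range (k + 1),
          ((2 * k + 1).choose i : ℝ) * p ^ (2 * k + 1 - i) * (1 - p) ^ (i + 1)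
        = (1 - p) * (1 - Bsum (2 * k + 1) k p) := by
      intro g hg
      have step1 : ∑ i ∈ Finset.range (k + 1),
          ((2 * k + 1).choose i : ℝ) * p ^ (2 * k + 1 - i) * (1 - p) ^ (i + 1)
          = (1 - p) * ∑ i ∈ Finset.range (k + 1), g (2 * k + 1 - i) := by
        rw [Finset.mul_sum]
        refine Finset.sum_congr rfl fun i hi => ?_
        have hik : i ≤ k := Nat.lt_succ_iff.mp (Finset.mem_range.mp hi)
        have hin : i ≤ 2 * k + 1 := by omega
        have e1 : (2 * k + 1).choose (2 * k + 1 - i) = (2 * k + 1).choose i :=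
          Nat.choose_symm hin
        have e2 : 2 * k + 1 - (2 * k + 1 - i) = i := by omega
        rw [hg]
        simp only [e1, e2]
        ring
      have step2 : ∑ i ∈ Finset.range (k + 1), g (2 * k + 1 - i)
          = ∑ i ∈ Finset.Ico (k + 1) (2 * k + 2), g i := by
        have h := Finset.sum_Ico_reflect g 0 (n := 2 * k + 1) (m := k + 1) (by omega)
        rw [show 2 * k + 1 + 1 - (k + 1) = k + 1 by omega,
            show 2 * k + 1 + 1 - 0 = 2 * k + 2 by omega] at h
        rw [Finset.range_eq_Ico]
        exact h
      have hB : Bsum (2 * k + 1) k p = ∑ i ∈ Finset.range (k + 1), g i := by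
        rw [Bsum, hg]
      have step3 : Bsum (2 * k + 1) k p + ∑ i ∈ Finset.Ico (k + 1) (2 * k + 2), g i = 1 := by
        rw [hB]
        have hsplit := Finset.sum_range_add_sum_Ico g (by omega : k + 1 ≤ 2 * k + 2)
        rw [hsplit]
        rw [hg]
        exact sum_all k p
      rw [step1, step2]
      have hfin : ∑ i ∈ Finset.Ico (k + 1) (2 * k + 2), g i = 1 - Bsum (2 * k + 1) k p := by
        linarith
      rw [hfin]
    exact hg _ rfl
  rw [majErr, h1, h2]

/-- For odd `n = 2k+1`, `L(p,n) - L(p,n+2) = C(n,k) (2p-1)^2 p^{k+1} (1-p)^{k+1} ≥ 0`,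
hence `L(p,n)` is nonincreasing in `n` along odd values. -/
theorem majErr_sub_succ (k : ℕ) (p : ℝ) (hp : p ∈ Set.Icc (0 : ℝ) 1) :
    majErr k p - majErr (k + 1) p
      = (Nat.choose (2 * k + 1) k : ℝ) * (2 * p - 1) ^ 2 * p ^ (k + 1) * (1 - p) ^ (k + 1)
    ∧ 0 ≤ (Nat.choose (2 * k + 1) k : ℝ) * (2 * p - 1) ^ 2 * p ^ (k + 1) * (1 - p) ^ (k + 1)
    ∧ majErr (k + 1) p ≤ majErr k p := by
  obtain ⟨hp0, hp1⟩ := hp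
  have hsym : (2 * k + 1).choose (k + 1) = (2 * k + 1).choose k := by
    have h := Nat.choose_symm (by omega : k + 1 ≤ 2 * k + 1)
    rw [show 2 * k + 1 - (k + 1) = k by omega] at h
    exact h.symm
  have hpas : (2 * k + 2).choose (k + 1) = 2 * ((2 * k + 1).choose k) := by
    rw [show 2 * k + 2 = 2 * k + 1 + 1 from rfl, Nat.choose_succ_succ, hsym]
    omega
  -- the three recursion steps
  have hA := Bsum_step p (2 * k + 2) (k + 1) (by omega)
  rw [show 2 * k + 2 - (k + 1) = k + 1 by omega, hpas] at hA
  have hB := Bsum_step p (2 * k + 1) (k + 1) (by omega)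
  rw [show 2 * k + 1 - (k + 1) = k by omega, hsym] at hB
  have hC := Bsum_succ (2 * k + 1) k p
  rw [show 2 * k + 1 - (k + 1) = k by omega, hsym] at hC
  have hB' : Bsum (2 * (k + 1) + 1) (k + 1) p
      = Bsum (2 * k + 1) k p
        + ((2 * k + 1).choose k : ℝ) * p ^ (k + 1) * (1 - p) ^ k
        - ((2 * k + 1).choose k : ℝ) * p ^ (k + 2) * (1 - p) ^ k
        - (2 * ((2 * k + 1).choose k) : ℝ) * p ^ (k + 2) * (1 - p) ^ (k + 1) := by
    rw [show 2 * (k + 1) + 1 = 2 * k + 2 + 1 by ring]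
    rw [hA, hB, hC]
    push_cast
    ring
  have hmain : majErr k p - majErr (k + 1) p
      = (Nat.choose (2 * k + 1) k : ℝ) * (2 * p - 1) ^ 2 * p ^ (k + 1) * (1 - p) ^ (k + 1) := by
    rw [majErr_eq, majErr_eq, hB']
    have e1 : (1 - p) ^ (k + 1) = (1 - p) ^ k * (1 - p) := pow_succ _ _
    have e2 : p ^ (k + 2) = p ^ (k + 1) * p := pow_succ _ _
    rw [e1, e2]
    ring
  have hnonneg : 0 ≤ (Nat.choose (2 * k + 1) k : ℝ) * (2 * p - 1) ^ 2 * p ^ (k + 1) * (1 - p) ^ (k + 1) := by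
    have := pow_nonneg hp0 (k + 1)
    have := pow_nonneg (by linarith : (0:ℝ) ≤ 1 - p) (k + 1)
    positivity
  exact ⟨hmain, hnonneg, by linarith⟩
end

section
/- For every odd n, the polynomial function p \mapsto L(p,n) is concave in some neighbourhood of p = 1/2. -/
open Finset

noncomputable def cc (k i : ℕ) : ℝ := (Nat.choose (2*k+1) i : ℝ)

/-- first derivative of `majErr k` -/
noncomputable def D1 (k : ℕ) (p : ℝ) : ℝ :=
  (∑ i ∈ Finset.range (k+1), cc k i *
      (((i:ℝ)+1) * p ^ i * (1-p) ^ (2*k+1-i) - ((2*k+1-i : ℕ) : ℝ) * p ^ (i+1) * (1-p) ^ (2*k-i)))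
  + ∑ i ∈ Finset.range (k+1), cc k i *
      (((2*k+1-i : ℕ) : ℝ) * p ^ (2*k-i) * (1-p) ^ (i+1) - ((i:ℝ)+1) * p ^ (2*k+1-i) * (1-p) ^ i)

/-- second derivative of `majErr k` -/
noncomputable def D2 (k : ℕ) (p : ℝ) : ℝ :=
  (∑ i ∈ Finset.range (k+1), cc k i *
      ((((i:ℝ)+1) * ((i:ℝ) * p ^ (i-1)) * (1-p) ^ (2*k+1-i)
          - ((i:ℝ)+1) * p ^ i * (((2*k+1-i : ℕ) : ℝ) * (1-p) ^ (2*k-i)))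
       - (((2*k+1-i : ℕ) : ℝ) * (((i:ℝ)+1) * p ^ i) * (1-p) ^ (2*k-i)
          - ((2*k+1-i : ℕ) : ℝ) * p ^ (i+1) * (((2*k-i : ℕ) : ℝ) * (1-p) ^ (2*k-i-1)))))
  + ∑ i ∈ Finset.range (k+1), cc k i *
      ((((2*k+1-i : ℕ) : ℝ) * (((2*k-i : ℕ) : ℝ) * p ^ (2*k-i-1)) * (1-p) ^ (i+1)
          - ((2*k+1-i : ℕ) : ℝ) * p ^ (2*k-i) * (((i:ℝ)+1) * (1-p) ^ i))
       - (((i:ℝ)+1) * (((2*k+1-i : ℕ) : ℝ) * p ^ (2*k-i)) * (1-p) ^ i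
          - ((i:ℝ)+1) * p ^ (2*k+1-i) * ((i:ℝ) * (1-p) ^ (i-1))))

lemma hasDerivAt_one_sub_pow (b : ℕ) (p : ℝ) :
    HasDerivAt (fun x : ℝ => (1-x) ^ b) (-((b:ℝ) * (1-p) ^ (b-1))) p := by
  have h := ((hasDerivAt_id p).const_sub 1).fun_pow b
  simp only [id_eq] at h
  refine h.congr_deriv ?_
  ring

lemma hasDerivAt_majErr (k : ℕ) (p : ℝ) : HasDerivAt (majErr k) (D1 k p) p := by
  unfold majErr D1
  apply HasDerivAt.add
  · apply HasDerivAt.fun_sum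
    intro i hi
    have hik : i ≤ k := Nat.lt_succ_iff.mp (Finset.mem_range.mp hi)
    have h := (((hasDerivAt_pow (i+1) p).const_mul
        ((Nat.choose (2*k+1) i : ℝ))).fun_mul (hasDerivAt_one_sub_pow (2*k+1-i) p))
    refine h.congr_deriv ?_
    have e1 : i + 1 - 1 = i := rfl
    have e2 : 2*k+1-i-1 = 2*k-i := by omega
    rw [e1, e2]
    push_cast
    unfold cc
    ring
  · apply HasDerivAt.fun_sum
    intro i hi
    have hik : i ≤ k := Nat.lt_succ_iff.mp (Finset.mem_range.mp hi)
    have h := (((hasDerivAt_pow (2*k+1-i) p).const_mul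
        ((Nat.choose (2*k+1) i : ℝ))).fun_mul (hasDerivAt_one_sub_pow (i+1) p))
    refine h.congr_deriv ?_
    have e1 : i + 1 - 1 = i := rfl
    have e2 : 2*k+1-i-1 = 2*k-i := by omega
    rw [e1, e2]
    push_cast
    unfold cc
    ring

lemma hasDerivAt_D1 (k : ℕ) (p : ℝ) : HasDerivAt (D1 k) (D2 k p) p := by
  unfold D1 D2
  apply HasDerivAt.add
  · apply HasDerivAt.fun_sum
    intro i hi
    have hik : i ≤ k := Nat.lt_succ_iff.mp (Finset.mem_range.mp hi)
    have h1 : HasDerivAt (fun p : ℝ => ((i:ℝ)+1) * p ^ i * (1-p) ^ (2*k+1-i))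
        (((i:ℝ)+1) * ((i:ℝ) * p ^ (i-1)) * (1-p) ^ (2*k+1-i)
          - ((i:ℝ)+1) * p ^ i * (((2*k+1-i : ℕ) : ℝ) * (1-p) ^ (2*k-i))) p := by
      have h := (((hasDerivAt_pow i p).const_mul ((i:ℝ)+1)).fun_mul
        (hasDerivAt_one_sub_pow (2*k+1-i) p))
      refine h.congr_deriv ?_
      have e2 : 2*k+1-i-1 = 2*k-i := by omega
      rw [e2]; ring
    have h2 : HasDerivAt (fun p : ℝ => ((2*k+1-i : ℕ) : ℝ) * p ^ (i+1) * (1-p) ^ (2*k-i))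
        (((2*k+1-i : ℕ) : ℝ) * (((i:ℝ)+1) * p ^ i) * (1-p) ^ (2*k-i)
          - ((2*k+1-i : ℕ) : ℝ) * p ^ (i+1) * (((2*k-i : ℕ) : ℝ) * (1-p) ^ (2*k-i-1))) p := by
      have h := (((hasDerivAt_pow (i+1) p).const_mul ((2*k+1-i : ℕ) : ℝ)).fun_mul
        (hasDerivAt_one_sub_pow (2*k-i) p))
      refine h.congr_deriv ?_
      have e1 : i + 1 - 1 = i := rfl
      rw [e1]; push_cast; ring
    exact (h1.sub h2).const_mul _
  · apply HasDerivAt.fun_sum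
    intro i hi
    have hik : i ≤ k := Nat.lt_succ_iff.mp (Finset.mem_range.mp hi)
    have h1 : HasDerivAt (fun p : ℝ => ((2*k+1-i : ℕ) : ℝ) * p ^ (2*k-i) * (1-p) ^ (i+1))
        (((2*k+1-i : ℕ) : ℝ) * (((2*k-i : ℕ) : ℝ) * p ^ (2*k-i-1)) * (1-p) ^ (i+1)
          - ((2*k+1-i : ℕ) : ℝ) * p ^ (2*k-i) * (((i:ℝ)+1) * (1-p) ^ i)) p := by
      have h := (((hasDerivAt_pow (2*k-i) p).const_mul ((2*k+1-i : ℕ) : ℝ)).fun_mul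
        (hasDerivAt_one_sub_pow (i+1) p))
      refine h.congr_deriv ?_
      have e1 : i + 1 - 1 = i := rfl
      rw [e1]; push_cast; ring
    have h2 : HasDerivAt (fun p : ℝ => ((i:ℝ)+1) * p ^ (2*k+1-i) * (1-p) ^ i)
        (((i:ℝ)+1) * (((2*k+1-i : ℕ) : ℝ) * p ^ (2*k-i)) * (1-p) ^ i
          - ((i:ℝ)+1) * p ^ (2*k+1-i) * ((i:ℝ) * (1-p) ^ (i-1))) p := by
      have h := (((hasDerivAt_pow (2*k+1-i) p).const_mul ((i:ℝ)+1)).fun_mul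
        (hasDerivAt_one_sub_pow i p))
      refine h.congr_deriv ?_
      have e2 : 2*k+1-i-1 = 2*k-i := by omega
      rw [e2]; ring
    exact (h1.sub h2).const_mul _

lemma continuous_D2 (k : ℕ) : Continuous (D2 k) := by
  unfold D2
  fun_prop

lemma half_pow_pred (m : ℕ) : (m:ℝ) * ((1:ℝ)/2) ^ (m-1) = 2 * m * ((1:ℝ)/2) ^ m := by
  cases m with
  | zero => simp
  | succ n => simp only [Nat.add_sub_cancel]; push_cast; rw [pow_succ]; ring

lemma sum_telescope_neg (k : ℕ) :
    ∑ i ∈ Finset.range (k+1), (2 * cc k i * (4*((k:ℝ)-(i:ℝ))^2 - 2*(k:ℝ) - 2))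
      = -4*((k:ℝ)+1)*cc k (k+1) := by
  have hcong : ∀ i ∈ Finset.range (k+1),
      2 * cc k i * (4*((k:ℝ)-(i:ℝ))^2 - 2*(k:ℝ) - 2)
        = (fun j : ℕ => 4*(j:ℝ)*((k:ℝ)-(j:ℝ))*cc k j) (i+1)
          - (fun j : ℕ => 4*(j:ℝ)*((k:ℝ)-(j:ℝ))*cc k j) i := by
    intro i hi
    have hik : i ≤ k := Nat.lt_succ_iff.mp (Finset.mem_range.mp hi)
    have hrec0 := Nat.choose_succ_right_eq (2*k+1) i
    have hrec : ((i:ℝ)+1) * cc k (i+1) = (2*(k:ℝ)+1-(i:ℝ)) * cc k i := by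
      unfold cc
      have : ((Nat.choose (2*k+1) (i+1) * (i+1) : ℕ) : ℝ)
          = ((Nat.choose (2*k+1) i * (2*k+1-i) : ℕ) : ℝ) := by exact_mod_cast hrec0
      rw [Nat.cast_mul, Nat.cast_mul, Nat.cast_sub (by omega)] at this
      push_cast at this ⊢
      nlinarith [this]
    simp only
    push_cast
    linear_combination (-4*((k:ℝ)-(i:ℝ)-1)) * hrec
  rw [Finset.sum_congr rfl hcong,
    Finset.sum_range_sub (fun j : ℕ => 4*(j:ℝ)*((k:ℝ)-(j:ℝ))*cc k j) (k+1)]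
  push_cast
  ring

lemma D2_half_eq (k : ℕ) : D2 k (1/2)
    = ((1:ℝ)/2)^(2*k) * ∑ i ∈ Finset.range (k+1),
        (2 * cc k i * (4*((k:ℝ)-(i:ℝ))^2 - 2*(k:ℝ) - 2)) := by
  unfold D2
  rw [← Finset.sum_add_distrib, Finset.mul_sum]
  apply Finset.sum_congr rfl
  intro i hi
  have hik : i ≤ k := Nat.lt_succ_iff.mp (Finset.mem_range.mp hi)
  have h2 : (1:ℝ) - 1/2 = 1/2 := by norm_num
  rw [h2]
  simp only [half_pow_pred]
  have c1 : ((2*k+1-i : ℕ):ℝ) = 2*(k:ℝ)+1-(i:ℝ) := by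
    rw [Nat.cast_sub (by omega)]; push_cast; ring
  have c2 : ((2*k-i : ℕ):ℝ) = 2*(k:ℝ)-(i:ℝ) := by
    rw [Nat.cast_sub (by omega)]; push_cast; ring
  have q1 : ((1:ℝ)/2)^(2*k+1-i) = ((1:ℝ)/2)^(2*k+1) / ((1:ℝ)/2)^i :=
    pow_sub₀ _ (by norm_num) (by omega)
  have q2 : ((1:ℝ)/2)^(2*k-i) = ((1:ℝ)/2)^(2*k) / ((1:ℝ)/2)^i :=
    pow_sub₀ _ (by norm_num) (by omega)
  have q3 : ((1:ℝ)/2)^(2*k+1) = ((1:ℝ)/2)^(2*k) * (1/2) := pow_succ _ _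
  simp only [c1, c2, q1, q2, q3]
  have hne : ((1:ℝ)/2)^i ≠ 0 := by positivity
  field_simp
  ring

lemma D2_half_neg (k : ℕ) : D2 k (1/2) < 0 := by
  rw [D2_half_eq, sum_telescope_neg]
  have hpos : (0:ℝ) < cc k (k+1) := by
    unfold cc
    exact_mod_cast Nat.choose_pos (by omega)
  have hp : (0:ℝ) < ((1:ℝ)/2)^(2*k) := by positivity
  have hneg : -4*((k:ℝ)+1)*cc k (k+1) < 0 := by nlinarith
  exact mul_neg_of_pos_of_neg hp hneg

/-- For every odd `n = 2k+1`, `p ↦ L(p,n)` is concave in a neighbourhood of `p = 1/2`. -/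
theorem majErr_concave_near_half (k : ℕ) :
    ∃ δ > (0 : ℝ), ConcaveOn ℝ (Set.Icc (1 / 2 - δ) (1 / 2 + δ)) (majErr k) := by
  have hd1 : deriv (majErr k) = D1 k := funext fun p => (hasDerivAt_majErr k p).deriv
  have hd2 : deriv (D1 k) = D2 k := funext fun p => (hasDerivAt_D1 k p).deriv
  have hev : ∀ᶠ x in nhds (1/2 : ℝ), D2 k x < 0 :=
    (continuous_D2 k).continuousAt.eventually_lt continuousAt_const (D2_half_neg k)
  obtain ⟨ε, hε, hball⟩ := Metric.eventually_nhds_iff.mp hev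
  refine ⟨ε/2, by positivity, ?_⟩
  apply concaveOn_of_deriv2_nonpos' (convex_Icc _ _)
  · intro x _; exact (hasDerivAt_majErr k x).differentiableAt.differentiableWithinAt
  · rw [hd1]; intro x _; exact (hasDerivAt_D1 k x).differentiableAt.differentiableWithinAt
  · intro x hx
    have : dist x (1/2 : ℝ) < ε := by
      rw [Real.dist_eq]
      rcases hx with ⟨h1, h2⟩
      rw [abs_lt]
      constructor <;> nlinarith
    have := hball this
    simp only [Function.iterate_succ, Function.iterate_zero, Function.comp_apply, id]
    rw [hd1, hd2]
    exact le_of_lt this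
end

section
/- For n = 2k+1 with k \geq 1, the Taylor expansion of L(p,n) at p = 0 is L(p,n) = p + C(2k+1,k) p^{k+1} + o(p^{k+1}); equivalently, in the polynomial \sum_{i=0}^{k} C(n,i) p^i (1-p)^{n-i}, all coefficients of p^m for 1 \leq m \leq k vanish. -/
/-!
Both claims come from `(p + (1 - p)) ^ n = 1`: the binomial terms with `i ≥ k + 1` are
divisible by `p ^ (k + 1)`, so `∑_{i ≤ k} C(n,i) p^i (1-p)^(n-i) ≡ 1 (mod p^(k+1))`.
Multiplied by `p`, the first sum of `L(p,n)` is `p` modulo `p^(k+2)`; in the second sum only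
the term `i = k` has degree below `k + 2` in `p`, and it is
`C(n,k) p^(k+1) (1-p)^(k+1) ≡ C(n,k) p^(k+1) (mod p^(k+2))`.
-/

open Polynomial

open Finset Asymptotics

section CommRing

variable {R : Type*} [CommRing R] {x y : R}

/-- `majErr k p` is `majErrOf p (1 - p) k`. -/
def majErrOf (x y : R) (k : ℕ) : R :=
  ∑ i ∈ range (k + 1), ((2 * k + 1).choose i : R) * x ^ (i + 1) * y ^ (2 * k + 1 - i)
    + ∑ i ∈ range (k + 1), ((2 * k + 1).choose i : R) * x ^ (2 * k + 1 - i) * y ^ (i + 1)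

theorem pow_dvd_one_sub_sum_range_choose (hxy : x + y = 1) {n j : ℕ} (hj : j ≤ n + 1) :
    x ^ j ∣ 1 - ∑ i ∈ range j, (n.choose i : R) * x ^ i * y ^ (n - i) := by
  have hsum : ∑ i ∈ range (n + 1), (n.choose i : R) * x ^ i * y ^ (n - i) = 1 := by
    have h := add_pow x y n
    rw [hxy, one_pow] at h
    rw [h]
    exact sum_congr rfl fun i _ => by ring
  rw [← hsum, ← sum_range_add_sum_Ico _ hj, add_sub_cancel_left]
  refine dvd_sum fun i hi => ?_
  exact (pow_dvd_pow x (mem_Ico.1 hi).1).mul_left _ |>.mul_right _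

theorem pow_dvd_majErrOf_sub (hxy : x + y = 1) (k : ℕ) :
    x ^ (k + 2) ∣ majErrOf x y k - (x + ((2 * k + 1).choose k : R) * x ^ (k + 1)) := by
  set c : R := ((2 * k + 1).choose k : R)
  have hfirst : x ^ (k + 2) ∣ x -
      ∑ i ∈ range (k + 1), ((2 * k + 1).choose i : R) * x ^ (i + 1) * y ^ (2 * k + 1 - i) := by
    have h := pow_dvd_one_sub_sum_range_choose hxy (n := 2 * k + 1) (j := k + 1) (by omega)
    rw [pow_succ', show x - _ = x * (1 - _) from ?_]
    · exact mul_dvd_mul_left x h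
    rw [mul_sub, mul_one, mul_sum]
    exact congrArg _ (sum_congr rfl fun i _ => by ring)
  have hlow : x ^ (k + 2) ∣
      ∑ i ∈ range k, ((2 * k + 1).choose i : R) * x ^ (2 * k + 1 - i) * y ^ (i + 1) :=
    dvd_sum fun i hi =>
      ((pow_dvd_pow x (by rw [mem_range] at hi; omega)).mul_left _).mul_right _
  have hlast : x ^ (k + 2) ∣ c * x ^ (2 * k + 1 - k) * y ^ (k + 1) - c * x ^ (k + 1) := by
    have hy : x ∣ y ^ (k + 1) - 1 := by
      simpa [show y - 1 = -x by rw [← hxy]; ring] using sub_dvd_pow_sub_pow y 1 (k + 1)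
    rw [show 2 * k + 1 - k = k + 1 by omega, pow_succ,
      show c * x ^ (k + 1) * y ^ (k + 1) - c * x ^ (k + 1) = x ^ (k + 1) * (c * (y ^ (k + 1) - 1))
        by ring]
    exact mul_dvd_mul_left _ (hy.mul_left c)
  rw [majErrOf,
    sum_range_succ (fun i => ((2 * k + 1).choose i : R) * x ^ (2 * k + 1 - i) * y ^ (i + 1)) k]
  convert (hlow.add hlast).sub hfirst using 1
  ring

end CommRing

theorem isLittleO_eval_pow_of_X_pow_succ_dvd {𝕜 : Type*} [NontriviallyNormedField 𝕜]
    {F : 𝕜[X]} {j : ℕ} (h : X ^ (j + 1) ∣ F) :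
    (fun p => F.eval p) =o[nhds 0] fun p => p ^ j := by
  obtain ⟨Q, rfl⟩ := h
  have hQ : (fun p => Q.eval p) =O[nhds 0] fun _ => (1 : 𝕜) :=
    (Q.continuous.tendsto 0).isBigO_one 𝕜
  simp only [eval_mul, eval_pow, eval_X]
  refine ((isBigO_refl _ _).mul hQ).trans_isLittleO ?_
  simpa only [mul_one] using isLittleO_pow_pow (𝕜 := 𝕜) (Nat.lt_add_one j)

theorem majErr_expansion_at_zero_general (k : ℕ) :
    ((fun p : ℝ => majErr k p - (p + (Nat.choose (2 * k + 1) k : ℝ) * p ^ (k + 1)))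
        =o[nhds (0 : ℝ)] fun p : ℝ => p ^ (k + 1))
    ∧ ∀ m : ℕ, 1 ≤ m → m ≤ k →
        (∑ i ∈ Finset.range (k + 1),
          Polynomial.C ((Nat.choose (2 * k + 1) i : ℝ)) * Polynomial.X ^ i
            * (1 - Polynomial.X) ^ (2 * k + 1 - i)).coeff m = 0 := by
  have hX : (X : ℝ[X]) + (1 - X) = 1 := add_sub_cancel _ _
  constructor
  · refine (isLittleO_eval_pow_of_X_pow_succ_dvd (pow_dvd_majErrOf_sub hX k)).congr_left
      fun p => ?_
    simp [majErr, majErrOf, eval_finsetSum]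
  · intro m hm hmk
    have h := X_pow_dvd_iff.1 (pow_dvd_one_sub_sum_range_choose hX (n := 2 * k + 1) (j := k + 1)
      (by omega)) m (by omega)
    rw [coeff_sub, coeff_one, if_neg (by omega), zero_sub, neg_eq_zero] at h
    simpa only [C_eq_natCast] using h

/-- For `n = 2k+1`, `k ≥ 1`: `L(p,n) = p + C(2k+1,k) p^{k+1} + o(p^{k+1})` at `p = 0`;
equivalently, in the polynomial `∑_{i=0}^k C(n,i) X^i (1-X)^{n-i}`, the coefficients of
`p^m` vanish for `1 ≤ m ≤ k`. -/
theorem majErr_expansion_at_zero (k : ℕ) (hk : 1 ≤ k) :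
    ((fun p : ℝ => majErr k p - (p + (Nat.choose (2 * k + 1) k : ℝ) * p ^ (k + 1)))
        =o[nhds (0 : ℝ)] fun p : ℝ => p ^ (k + 1))
    ∧ ∀ m : ℕ, 1 ≤ m → m ≤ k →
        (∑ i ∈ Finset.range (k + 1),
          Polynomial.C ((Nat.choose (2 * k + 1) i : ℝ)) * Polynomial.X ^ i
            * (1 - Polynomial.X) ^ (2 * k + 1 - i)).coeff m = 0 :=
  majErr_expansion_at_zero_general k
end

section
/- Given an odd n and \epsilon > 0, there exists an odd N such that for all p in [\epsilon, 1-\epsilon], the concave envelope of p \mapsto L(p,N) on [0,1] satisfies \wideparen{L}(p,N) \leq L(p,n). -/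
/-- The concave envelope on `[0,1]`: the pointwise infimum over all concave majorants of `f`
on `[0,1]`, i.e. the smallest concave function on `[0,1]` majorizing `f`. -/
noncomputable def concEnv (f : ℝ → ℝ) (p : ℝ) : ℝ :=
  sInf {y : ℝ | ∃ g : ℝ → ℝ, ConcaveOn ℝ (Set.Icc (0 : ℝ) 1) g ∧
    (∀ x ∈ Set.Icc (0 : ℝ) 1, f x ≤ g x) ∧ y = g p}

/-!
Write `L_K(x) = x + (1 - 2x) T_K(x)`, where `T_K(x) = P(Bin(2K+1, x) ≥ K+1)`. Both are symmetric
under `x ↦ 1 - x`, and `T_K` is convex on `[0, 1/2]` with `T_K(1/2) = 1/2`. For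
`q = min(p, 1 - p) ∈ [ε, 1/2]` it suffices to find a line `c + s x` lying above `L_K` on `[0, 1/2]`
and below `L_k` at `q`: the tent `c + s min(x, 1 - x)` is then a concave majorant of `L_K`.

The secant slope of the convex `T_k` at `1/2` is bounded by its derivative, so
`L_k(q) ≥ 1/2 - B(1 - 2q)²/2` for some `B ≥ 1`. If `q` is within `1/(8B)` of `1/2`, the tangent to
this parabola at `q` works: once `T_K(1/2 - 1/(4B)) ≤ 1/4`, convexity of `T_K` keeps `L_K` below
every such tangent. Otherwise `L_k(q) ≥ (1 + η) q` with `η = ε^(2k)/(4B)`, and the bound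
`T_K(x) ≤ x (4x(1-x))^K` gives `L_K(x) ≤ (1 + η) x` on `[0, 1/2]` for large `K`.
-/

open Finset Set Filter

/-- `P(Bin(2K+1, x) ≥ K+1)`, indexed by the number `i ≤ K` of failures. -/
noncomputable def binomTail (K : ℕ) (x : ℝ) : ℝ :=
  ∑ i ∈ range (K + 1), (Nat.choose (2 * K + 1) i : ℝ) * x ^ (2 * K + 1 - i) * (1 - x) ^ i

section binomTail

variable (K : ℕ)

theorem binomTail_add_binomTail_one_sub (x : ℝ) : binomTail K x + binomTail K (1 - x) = 1 := by
  have hsplit := add_pow (1 - x) x (2 * K + 1)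
  rw [sub_add_cancel, one_pow, show 2 * K + 1 + 1 = (K + 1) + (K + 1) by omega,
    sum_range_add] at hsplit
  rw [binomTail, binomTail, sub_sub_cancel]
  refine .trans ?_ hsplit.symm
  congr 1
  · exact sum_congr rfl fun i _ => by ring
  · rw [← sum_range_reflect]
    refine sum_congr rfl fun j hj => ?_
    rw [Finset.mem_range] at hj
    rw [← Nat.choose_symm (by omega : K + 1 - 1 - j ≤ 2 * K + 1),
      show 2 * K + 1 - (K + 1 - 1 - j) = K + 1 + j by omega,
      show 2 * K + 1 - (K + 1 + j) = K + 1 - 1 - j by omega]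
    ring

theorem binomTail_one_sub (x : ℝ) : binomTail K (1 - x) = 1 - binomTail K x := by
  linarith [binomTail_add_binomTail_one_sub K x]

theorem binomTail_half : binomTail K (1 / 2) = 1 / 2 := by
  linarith [binomTail_add_binomTail_one_sub K (1 / 2), show (1 : ℝ) - 1 / 2 = 1 / 2 by norm_num]

theorem binomTail_zero : binomTail K 0 = 0 :=
  sum_eq_zero fun i hi => by
    rw [Finset.mem_range] at hi
    rw [zero_pow (by omega), mul_zero, zero_mul]

theorem pow_le_binomTail {x : ℝ} (h0 : 0 ≤ x) (h1 : x ≤ 1) : x ^ (2 * K + 1) ≤ binomTail K x := by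
  simpa [binomTail] using single_le_sum (f := fun i => (Nat.choose (2 * K + 1) i : ℝ) *
    x ^ (2 * K + 1 - i) * (1 - x) ^ i) (fun i _ => by positivity) (Finset.mem_range.2 K.succ_pos)

/-- Each term is `x^(K+1) x^(K-i) (1-x)^i ≤ x^(K+1) (1-x)^K`, and the coefficients sum to `4^K`. -/
theorem binomTail_le_mul_pow {x : ℝ} (h0 : 0 ≤ x) (h1 : x ≤ 1 / 2) :
    binomTail K x ≤ x * (4 * x * (1 - x)) ^ K := by
  have hterm : ∀ i ∈ range (K + 1), (Nat.choose (2 * K + 1) i : ℝ) * x ^ (2 * K + 1 - i) *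
      (1 - x) ^ i ≤ (Nat.choose (2 * K + 1) i : ℝ) * (x ^ (K + 1) * (1 - x) ^ K) := by
    intro i hi
    rw [Finset.mem_range] at hi
    rw [mul_assoc]
    refine mul_le_mul_of_nonneg_left ?_ (Nat.cast_nonneg _)
    calc x ^ (2 * K + 1 - i) * (1 - x) ^ i = x ^ (K + 1) * (x ^ (K - i) * (1 - x) ^ i) := by
          rw [← mul_assoc, ← pow_add]; congr 2; omega
      _ ≤ x ^ (K + 1) * ((1 - x) ^ (K - i) * (1 - x) ^ i) := by
          have : 0 ≤ 1 - x := by linarith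
          gcongr; linarith
      _ = x ^ (K + 1) * (1 - x) ^ K := by rw [← pow_add, Nat.sub_add_cancel (by omega)]
  calc binomTail K x ≤ _ := sum_le_sum hterm
    _ = x * (4 * x * (1 - x)) ^ K := by
      rw [← sum_mul, ← Nat.cast_sum, Nat.sum_range_choose_halfway]
      push_cast
      rw [mul_pow, mul_pow]
      ring

/-- The derivative telescopes, by `C(n, i+1) (i+1) = C(n, i) (n-i)`. -/
theorem hasDerivAt_binomTail (x : ℝ) :
    HasDerivAt (binomTail K)
      (((Nat.choose (2 * K + 1) (K + 1) * (K + 1) : ℕ) : ℝ) * (x * (1 - x)) ^ K) x := by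
  set n := 2 * K + 1
  set b : ℕ → ℝ := fun i => ((Nat.choose n i * i : ℕ) : ℝ) * x ^ (n - i) * (1 - x) ^ (i - 1)
  have hterm : ∀ i ∈ range (K + 1), HasDerivAt
      (fun y => (Nat.choose n i : ℝ) * y ^ (n - i) * (1 - y) ^ i) (b (i + 1) - b i) x := by
    intro i hi
    rw [Finset.mem_range] at hi
    refine (((hasDerivAt_const x _).mul (hasDerivAt_pow (n - i) x)).mul
      (((hasDerivAt_id' x).const_sub 1).pow i)).congr_deriv ?_
    have hc : Nat.choose n (i + 1) * (i + 1) = Nat.choose n i * (n - i) :=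
      Nat.choose_succ_right_eq n i
    simp only [b, hc, Nat.add_sub_cancel, Nat.sub_add_eq, Pi.mul_apply, Pi.pow_apply]
    push_cast [Nat.cast_sub (by omega : i ≤ n)]
    ring
  have h := HasDerivAt.fun_sum hterm
  rw [sum_range_sub] at h
  refine h.congr_deriv ?_
  simp only [b, n, mul_zero, Nat.cast_zero, zero_mul, sub_zero, Nat.add_sub_cancel,
    show 2 * K + 1 - (K + 1) = K by omega]
  rw [mul_pow]
  ring

theorem convexOn_binomTail : ConvexOn ℝ (Icc 0 (1 / 2)) (binomTail K) := by
  refine MonotoneOn.convexOn_of_deriv (convex_Icc _ _)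
    (fun x _ => (hasDerivAt_binomTail K x).continuousAt.continuousWithinAt)
    (fun x _ => (hasDerivAt_binomTail K x).differentiableAt.differentiableWithinAt) ?_
  intro a ha b hb hab
  rw [interior_Icc] at ha hb
  rw [(hasDerivAt_binomTail K a).deriv, (hasDerivAt_binomTail K b).deriv]
  exact mul_le_mul_of_nonneg_left
    (pow_le_pow_left₀ (by nlinarith [ha.1, ha.2]) (by nlinarith [ha.1, hb.2]) K) (Nat.cast_nonneg _)

/-- Convexity bounds the secant slope to `1/2` by the derivative there. -/
theorem exists_one_sub_two_mul_binomTail_le : ∃ D : ℝ, ∀ x ∈ Icc (0 : ℝ) (1 / 2),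
    1 - 2 * binomTail K x ≤ D * (1 - 2 * x) := by
  refine ⟨((Nat.choose (2 * K + 1) (K + 1) * (K + 1) : ℕ) : ℝ) * (1 / 2 * (1 - 1 / 2)) ^ K,
    fun x hx => ?_⟩
  rcases hx.2.eq_or_lt with rfl | hlt
  · norm_num [binomTail_half]
  have h := (convexOn_binomTail K).slope_le_of_hasDerivAt hx ⟨by norm_num, le_rfl⟩ hlt
    (hasDerivAt_binomTail K _)
  rw [slope_def_field, binomTail_half, div_le_iff₀ (by linarith)] at h
  linarith

end binomTail

theorem majErr_eq_s5 (K : ℕ) (x : ℝ) : majErr K x = x + (1 - 2 * x) * binomTail K x := by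
  have h : majErr K x = x * binomTail K (1 - x) + (1 - x) * binomTail K x := by
    rw [majErr, binomTail, binomTail, mul_sum, mul_sum, sub_sub_cancel]
    congr 1 <;> exact sum_congr rfl fun i _ => by ring
  rw [h, binomTail_one_sub]
  ring

theorem majErr_one_sub (K : ℕ) (x : ℝ) : majErr K (1 - x) = majErr K x := by
  rw [majErr_eq_s5, majErr_eq_s5, binomTail_one_sub]
  ring

theorem exists_parabola_le_majErr (k : ℕ) :
    ∃ B : ℝ, 1 ≤ B ∧ ∀ q ∈ Icc (0 : ℝ) (1 / 2), 1 / 2 - B * (1 - 2 * q) ^ 2 / 2 ≤ majErr k q := by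
  obtain ⟨D, hD⟩ := exists_one_sub_two_mul_binomTail_le k
  refine ⟨max D 1, le_max_right D 1, fun q hq => ?_⟩
  have ht : 0 ≤ 1 - 2 * q := by linarith [hq.2]
  have h := mul_le_mul_of_nonneg_left
    ((hD q hq).trans (mul_le_mul_of_nonneg_right (le_max_left D 1) ht)) ht
  rw [majErr_eq_s5]
  linarith

/-- The right-hand side is the tangent at `t` of the parabola `u ↦ 1/2 - B u²/2`, `u = 1 - 2x`. -/
theorem majErr_le_tangent {K : ℕ} {B t : ℝ} (hB : 1 / 2 ≤ B)
    (hK : binomTail K (1 / 2 - 1 / (4 * B)) ≤ 1 / 4) (ht0 : 0 ≤ t) (ht : t ≤ 1 / (4 * B)) :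
    ∀ x ∈ Icc (0 : ℝ) (1 / 2), majErr K x ≤ 1 / 2 + B * t ^ 2 / 2 - B * t * (1 - 2 * x) := by
  intro x hx
  have hB0 : 0 < B := by linarith
  have hBt : B * t ≤ 1 / 4 := by rw [le_div_iff₀ (by positivity)] at ht; linarith
  have hx₀ : 1 / 2 - 1 / (4 * B) ∈ Icc (0 : ℝ) (1 / 2) := by
    refine ⟨?_, by linarith [show 0 < 1 / (4 * B) by positivity]⟩
    rw [sub_nonneg, div_le_iff₀ (by positivity)]
    linarith
  have hu : 0 ≤ 1 - 2 * x := by linarith [hx.2]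
  rw [majErr_eq_s5]
  rcases le_total x (1 / 2 - 1 / (4 * B)) with hle | hle
  · have hT : binomTail K x ≤ 1 / 4 := by
      have h := (convexOn_binomTail K).le_on_segment ⟨le_rfl, by norm_num⟩ hx₀
        (by rw [segment_eq_Icc hx₀.1]; exact ⟨hx.1, hle⟩)
      rw [binomTail_zero] at h
      exact h.trans (max_le (by norm_num) hK)
    nlinarith [mul_le_mul_of_nonneg_left hT hu, mul_le_mul_of_nonneg_left hBt hu,
      mul_nonneg hB0.le (sq_nonneg t)]
  · -- `x = θ x₀ + (1 - θ)/2` with `x₀ = 1/2 - 1/(4B)`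
    set θ := 2 * B * (1 - 2 * x)
    have hθ1 : θ ≤ 1 := by
      have h := mul_le_mul_of_nonneg_left hle (by positivity : 0 ≤ 4 * B)
      rw [mul_sub, mul_one_div_cancel (by positivity)] at h
      linarith
    have hT : binomTail K x ≤ θ * (1 / 4) + (1 - θ) * (1 / 2) := by
      have h := (convexOn_binomTail K).2 hx₀ ⟨by norm_num, le_rfl⟩ (by positivity)
        (sub_nonneg.2 hθ1) (add_sub_cancel θ 1)
      simp only [smul_eq_mul, binomTail_half] at h
      have hpt : θ * (1 / 2 - 1 / (4 * B)) + (1 - θ) * (1 / 2) = x := by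
        simp only [θ]; field_simp; ring
      rw [hpt] at h
      nlinarith [mul_le_mul_of_nonneg_left hK (show 0 ≤ θ by positivity)]
    nlinarith [mul_le_mul_of_nonneg_left hT hu, mul_nonneg hB0.le (sq_nonneg (1 - 2 * x - t))]

theorem eventually_binomTail_le {x c : ℝ} (hx0 : 0 ≤ x) (hx : x < 1 / 2) (hc : 0 < c) :
    ∀ᶠ K in atTop, binomTail K x ≤ c := by
  have h4 : 4 * x * (1 - x) < 1 := by nlinarith
  filter_upwards [(tendsto_pow_atTop_nhds_zero_of_lt_one (by nlinarith) h4).eventually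
    (ge_mem_nhds hc)] with K hK
  calc binomTail K x ≤ x * (4 * x * (1 - x)) ^ K := binomTail_le_mul_pow K hx0 hx.le
    _ ≤ 1 * (4 * x * (1 - x)) ^ K :=
      mul_le_mul_of_nonneg_right (by linarith) (pow_nonneg (by nlinarith) K)
    _ ≤ c := by rwa [one_mul]

theorem mul_one_sub_sq_pow_le {K : ℕ} {t η : ℝ} (ht0 : 0 ≤ t) (ht1 : t ≤ 1) (hη : 0 ≤ η)
    (hK : (1 - η ^ 2) ^ K ≤ η) : t * (1 - t ^ 2) ^ K ≤ η := by
  have h1 : 0 ≤ 1 - t ^ 2 := by nlinarith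
  rcases le_total t η with h | h
  · calc t * (1 - t ^ 2) ^ K ≤ t * 1 := by gcongr; exact pow_le_one₀ h1 (by nlinarith)
      _ ≤ η := by linarith
  · calc t * (1 - t ^ 2) ^ K ≤ 1 * (1 - η ^ 2) ^ K := by gcongr
      _ ≤ η := by rwa [one_mul]

theorem eventually_majErr_le_mul {η : ℝ} (hη : 0 < η) :
    ∀ᶠ K in atTop, ∀ x ∈ Icc (0 : ℝ) (1 / 2), majErr K x ≤ (1 + η) * x := by
  have hη' : 0 < min η 1 := lt_min hη one_pos
  have h0 : 0 ≤ 1 - min η 1 ^ 2 := by nlinarith [min_le_right η 1]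
  filter_upwards [(tendsto_pow_atTop_nhds_zero_of_lt_one h0 (by nlinarith)).eventually
    (ge_mem_nhds hη')] with K hK x hx
  have hu : 0 ≤ 1 - 2 * x := by linarith [hx.2]
  have h := mul_one_sub_sq_pow_le hu (by linarith [hx.1]) hη'.le hK
  have hT := binomTail_le_mul_pow K hx.1 hx.2
  rw [show 4 * x * (1 - x) = 1 - (1 - 2 * x) ^ 2 by ring] at hT
  rw [majErr_eq_s5]
  calc x + (1 - 2 * x) * binomTail K x
      ≤ x + x * ((1 - 2 * x) * (1 - (1 - 2 * x) ^ 2) ^ K) := by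
        nlinarith [mul_le_mul_of_nonneg_left hT hu]
    _ ≤ x + x * η := by gcongr; exacts [hx.1, h.trans (min_le_left η 1)]
    _ = (1 + η) * x := by ring

theorem concEnv_le {f g : ℝ → ℝ} {p : ℝ} (hg : ConcaveOn ℝ (Icc 0 1) g)
    (hfg : ∀ x ∈ Icc (0 : ℝ) 1, f x ≤ g x) (hp : p ∈ Icc (0 : ℝ) 1) : concEnv f p ≤ g p :=
  csInf_le ⟨f p, by rintro y ⟨h, -, hfh, rfl⟩; exact hfh p hp⟩ ⟨g, hg, hfg, rfl⟩

theorem concEnv_le_of_le_line {f : ℝ → ℝ} (hf : ∀ x, f (1 - x) = f x) {c s p : ℝ} (hs : 0 ≤ s)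
    (hline : ∀ x ∈ Icc (0 : ℝ) (1 / 2), f x ≤ c + s * x) (hp : p ∈ Icc (0 : ℝ) 1) :
    concEnv f p ≤ c + s * min p (1 - p) := by
  refine concEnv_le (g := fun x => c + s * min x (1 - x)) ?_ (fun x hx => ?_) hp
  · have hmin : ConcaveOn ℝ (Icc (0 : ℝ) 1) fun x => min x (1 - x) :=
      (concaveOn_id (convex_Icc 0 1)).inf ((concaveOn_const 1 (convex_Icc 0 1)).sub
        (convexOn_id (convex_Icc 0 1)))
    exact (concaveOn_const c (convex_Icc 0 1)).add (hmin.smul hs)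
  · rcases le_total x (1 / 2) with h | h
    · rw [min_eq_left (by linarith)]
      exact hline x ⟨hx.1, h⟩
    · rw [min_eq_right (by linarith), ← hf]
      exact hline (1 - x) ⟨by linarith [hx.2], by linarith⟩

theorem exists_line_between {k K : ℕ} {B ε q : ℝ} (hB : 1 ≤ B)
    (hk : ∀ q ∈ Icc (0 : ℝ) (1 / 2), 1 / 2 - B * (1 - 2 * q) ^ 2 / 2 ≤ majErr k q)
    (hK₁ : binomTail K (1 / 2 - 1 / (4 * B)) ≤ 1 / 4)
    (hK₂ : ∀ x ∈ Icc (0 : ℝ) (1 / 2), majErr K x ≤ (1 + ε ^ (2 * k) / (4 * B)) * x)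
    (hε : 0 ≤ ε) (hq : q ∈ Icc ε (1 / 2)) :
    ∃ c s : ℝ, 0 ≤ s ∧ (∀ x ∈ Icc (0 : ℝ) (1 / 2), majErr K x ≤ c + s * x) ∧
      c + s * q ≤ majErr k q := by
  have hq0 : 0 ≤ q := hε.trans hq.1
  have ht : 0 ≤ 1 - 2 * q := by linarith [hq.2]
  rcases le_total (1 - 2 * q) (1 / (4 * B)) with hnear | hfar
  · refine ⟨1 / 2 + B * (1 - 2 * q) ^ 2 / 2 - B * (1 - 2 * q), 2 * B * (1 - 2 * q),
      by positivity, fun x hx => ?_, ?_⟩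
    · linarith [majErr_le_tangent (by linarith) hK₁ ht hnear x hx]
    · linarith [hk q ⟨hq0, hq.2⟩]
  · refine ⟨0, 1 + ε ^ (2 * k) / (4 * B), by positivity, fun x hx => by simpa using hK₂ x hx, ?_⟩
    have hpow : q * ε ^ (2 * k) ≤ q ^ (2 * k + 1) := by
      rw [pow_succ, mul_comm]
      gcongr
      exact hq.1
    rw [majErr_eq_s5]
    calc 0 + (1 + ε ^ (2 * k) / (4 * B)) * q = q + 1 / (4 * B) * (q * ε ^ (2 * k)) := by ring
      _ ≤ q + (1 - 2 * q) * q ^ (2 * k + 1) := by gcongr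
      _ ≤ q + (1 - 2 * q) * binomTail k q := by
        gcongr
        exact pow_le_binomTail k hq0 (by linarith [hq.2])

/-- Given odd `n = 2k+1` and `ε > 0`, there is an odd `N = 2K+1` such that the concave
envelope of `L(·,N)` is bounded by `L(·,n)` on `[ε, 1-ε]`. -/
theorem concEnv_majErr_le (k : ℕ) (ε : ℝ) (hε : 0 < ε) :
    ∃ K : ℕ, ∀ p ∈ Set.Icc ε (1 - ε), concEnv (majErr K) p ≤ majErr k p := by
  obtain ⟨B, hB, hk⟩ := exists_parabola_le_majErr k
  have hx₀ : 0 ≤ 1 / 2 - 1 / (4 * B) := by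
    rw [sub_nonneg, div_le_iff₀ (by positivity)]
    linarith
  obtain ⟨K, hK₁, hK₂⟩ := ((eventually_binomTail_le hx₀ (sub_lt_self _ (by positivity))
    (show (0 : ℝ) < 1 / 4 by norm_num)).and
    (eventually_majErr_le_mul (show 0 < ε ^ (2 * k) / (4 * B) by positivity))).exists
  refine ⟨K, fun p hp => ?_⟩
  have hq : min p (1 - p) ∈ Icc ε (1 / 2) :=
    ⟨le_min hp.1 (by linarith [hp.2]), by linarith [min_le_left p (1 - p), min_le_right p (1 - p)]⟩
  obtain ⟨c, s, hs, hline, hcs⟩ := exists_line_between hB hk hK₁ hK₂ hε.le hq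
  calc concEnv (majErr K) p ≤ c + s * min p (1 - p) :=
        concEnv_le_of_le_line (majErr_one_sub K) hs hline ⟨by linarith [hp.1], by linarith [hp.2]⟩
    _ ≤ majErr k (min p (1 - p)) := hcs
    _ = majErr k p := by
        rcases min_choice p (1 - p) with h | h <;> rw [h]
        exact majErr_one_sub k p
end

section
/- For every Borel probability measure \mu on the circle S^1, there exists a cyclically monotone (hence Borel measurable) map f: S^1 \to S^1 such that the pushforward of the Haar (normalized Lebesgue) measure \nu under f equals \mu. -/
open MeasureTheory

/-- A self-map of the circle is cyclically monotone if it preserves the strict cyclic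
betweenness relation whenever the three images are pairwise distinct. -/
def CircMonotone (f : AddCircle (1 : ℝ) → AddCircle (1 : ℝ)) : Prop :=
  ∀ x y z : AddCircle (1 : ℝ), f x ≠ f y → f y ≠ f z → f x ≠ f z →
    (sbtw x y z ↔ sbtw (f x) (f y) (f z))

open Set Filter Topology ProbabilityTheory

/-- Strict cyclic order on triples of reals. -/
def Cyc (a b c : ℝ) : Prop := (a < b ∧ b < c) ∨ (b < c ∧ c < a) ∨ (c < a ∧ a < b)

lemma cyc_total {a b c : ℝ} (hab : a ≠ b) (hbc : b ≠ c) (hac : a ≠ c) :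
    Cyc a b c ∨ Cyc a c b := by
  rcases hab.lt_or_gt with h | h <;> rcases hbc.lt_or_gt with h' | h' <;>
    rcases hac.lt_or_gt with h'' | h'' <;> unfold Cyc <;>
    tauto

lemma cyc_not_cyc {a b c : ℝ} (h1 : Cyc a b c) (h2 : Cyc a c b) : False := by
  rcases h1 with ⟨u, v⟩ | ⟨u, v⟩ | ⟨u, v⟩ <;> rcases h2 with ⟨u', v'⟩ | ⟨u', v'⟩ | ⟨u', v'⟩ <;>
    linarith

lemma cyc_mono {G : ℝ → ℝ} (hG : Monotone G) {a b c : ℝ} (hab : G a ≠ G b)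
    (hbc : G b ≠ G c) (hac : G a ≠ G c) (h : Cyc a b c) : Cyc (G a) (G b) (G c) := by
  rcases h with ⟨h1, h2⟩ | ⟨h1, h2⟩ | ⟨h1, h2⟩
  · exact Or.inl ⟨(hG h1.le).lt_of_ne hab, (hG h2.le).lt_of_ne hbc⟩
  · exact Or.inr (Or.inl ⟨(hG h1.le).lt_of_ne hbc, (hG h2.le).lt_of_ne hac.symm⟩)
  · exact Or.inr (Or.inr ⟨(hG h1.le).lt_of_ne hac.symm, (hG h2.le).lt_of_ne hab⟩)

lemma key_sbtw {a b c : ℝ} (hab : a < b) (hbc : b < c) (h : c < a + 1) :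
    sbtw (a : AddCircle (1 : ℝ)) (b : AddCircle (1 : ℝ)) (c : AddCircle (1 : ℝ)) := by
  rw [sbtw_iff_btw_not_btw, QuotientAddGroup.btw_coe_iff, QuotientAddGroup.btw_coe_iff]
  constructor
  · rw [(toIcoMod_eq_self _).mpr ⟨hab.le, by linarith⟩,
      (toIocMod_eq_self _).mpr ⟨hab.trans hbc, by linarith⟩]
    exact hbc.le
  · rw [← toIcoMod_add_right, ← toIocMod_add_right,
      (toIcoMod_eq_self _).mpr ⟨by linarith, by linarith⟩,
      (toIocMod_eq_self _).mpr ⟨by linarith, by linarith⟩]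
    simp only [not_le]
    linarith

lemma cyc_to_sbtw {a b c : ℝ} (ha : a ∈ Ioc (0:ℝ) 1) (hb : b ∈ Ioc (0:ℝ) 1)
    (hc : c ∈ Ioc (0:ℝ) 1) (h : Cyc a b c) :
    sbtw (a : AddCircle (1 : ℝ)) (b : AddCircle (1 : ℝ)) (c : AddCircle (1 : ℝ)) := by
  obtain ⟨ha0, ha1⟩ := ha; obtain ⟨hb0, hb1⟩ := hb; obtain ⟨hc0, hc1⟩ := hc
  rcases h with ⟨h1, h2⟩ | ⟨h1, h2⟩ | ⟨h1, h2⟩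
  · exact key_sbtw h1 h2 (by linarith)
  · exact (key_sbtw h1 h2 (by linarith)).cyclic_left.cyclic_left
  · exact (key_sbtw h1 h2 (by linarith)).cyclic_left

lemma sbtw_coe_iff {a b c : ℝ} (ha : a ∈ Ioc (0:ℝ) 1) (hb : b ∈ Ioc (0:ℝ) 1)
    (hc : c ∈ Ioc (0:ℝ) 1) (hab : a ≠ b) (hbc : b ≠ c) (hac : a ≠ c) :
    sbtw (a : AddCircle (1 : ℝ)) (b : AddCircle (1 : ℝ)) (c : AddCircle (1 : ℝ)) ↔
      Cyc a b c := by
  constructor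
  · intro h
    by_contra hn
    rcases cyc_total hab hbc hac with h' | h'
    · exact hn h'
    · exact (sbtw_asymm h) (cyc_to_sbtw ha hc hb h').cyclic_left
  · exact cyc_to_sbtw ha hb hc

/-- Quantile function of a measure on `ℝ`. -/
noncomputable def Quant (ν : Measure ℝ) (θ : ℝ) : ℝ :=
  sInf {y | 0 ≤ y ∧ min θ 1 ≤ cdf ν y}

lemma quant_mono (ν : Measure ℝ) (hF1 : cdf ν 1 = 1) : Monotone (Quant ν) := by
  intro θ θ' h
  refine csInf_le_csInf ⟨0, fun y hy => hy.1⟩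
    ⟨1, zero_le_one, by rw [hF1]; exact min_le_right _ _⟩ ?_
  exact fun y hy => ⟨hy.1, le_trans (min_le_min h le_rfl) hy.2⟩

lemma quant_galois (ν : Measure ℝ) (hF0 : cdf ν 0 = 0) (hF1 : cdf ν 1 = 1)
    {θ : ℝ} (hθ : θ ∈ Ioc (0:ℝ) 1) (x : ℝ) : Quant ν θ ≤ x ↔ θ ≤ cdf ν x := by
  have hmin : min θ 1 = θ := min_eq_left hθ.2
  have hne : {y | 0 ≤ y ∧ min θ 1 ≤ cdf ν y}.Nonempty :=
    ⟨1, zero_le_one, by rw [hF1]; exact min_le_right _ _⟩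
  have hbdd : BddBelow {y | 0 ≤ y ∧ min θ 1 ≤ cdf ν y} := ⟨0, fun y hy => hy.1⟩
  constructor
  · intro h
    have key : θ ≤ cdf ν (Quant ν θ) := by
      have hrc : ContinuousWithinAt (cdf ν) (Ici (Quant ν θ)) (Quant ν θ) :=
        (cdf ν).right_continuous _
      have hrc' : Tendsto (cdf ν) (𝓝[>] (Quant ν θ)) (𝓝 (cdf ν (Quant ν θ))) :=
        hrc.tendsto.mono_left (nhdsWithin_mono _ Ioi_subset_Ici_self)
      refine ge_of_tendsto hrc' ?_
      filter_upwards [self_mem_nhdsWithin] with t ht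
      obtain ⟨s, hs, hst⟩ := exists_lt_of_csInf_lt hne ht
      calc θ = min θ 1 := hmin.symm
        _ ≤ cdf ν s := hs.2
        _ ≤ cdf ν t := monotone_cdf ν hst.le
    exact key.trans (monotone_cdf ν h)
  · intro h
    have hx0 : 0 ≤ x := by
      by_contra hx
      push_neg at hx
      have h1 : cdf ν x ≤ cdf ν 0 := monotone_cdf ν hx.le
      rw [hF0] at h1
      linarith [hθ.1]
    exact csInf_le hbdd ⟨hx0, by rw [hmin]; exact h⟩

lemma quant_mem (ν : Measure ℝ) (hF0 : cdf ν 0 = 0) (hF1 : cdf ν 1 = 1)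
    {θ : ℝ} (hθ : θ ∈ Ioc (0:ℝ) 1) : Quant ν θ ∈ Ioc (0:ℝ) 1 := by
  constructor
  · by_contra h
    push_neg at h
    have := (quant_galois ν hF0 hF1 hθ 0).mp h
    rw [hF0] at this
    linarith [hθ.1]
  · exact (quant_galois ν hF0 hF1 hθ 1).mpr (by rw [hF1]; exact hθ.2)

/-- Every Borel probability measure `μ` on the circle is the pushforward of the Haar
(normalized Lebesgue) measure under some cyclically monotone (hence Borel) map. -/
theorem exists_monotone_pushforward (μ : Measure (AddCircle (1 : ℝ)))
    [IsProbabilityMeasure μ] :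
    ∃ f : AddCircle (1 : ℝ) → AddCircle (1 : ℝ),
      CircMonotone f ∧ Measurable f ∧ Measure.map f volume = μ := by
  classical
  -- the representative map into (0,1]
  set ι : AddCircle (1 : ℝ) → ℝ := fun x => ((AddCircle.equivIoc 1 0 x : Ioc (0:ℝ) (0+1)) : ℝ)
    with hι_def
  have hι_mem : ∀ x, ι x ∈ Ioc (0:ℝ) 1 := by
    intro x
    have := (AddCircle.equivIoc 1 0 x).2
    simpa using this
  have hι_meas : Measurable ι :=
    measurable_subtype_coe.comp (AddCircle.measurableEquivIoc 1 0).measurable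
  have hι_sect : ∀ x, ((ι x : ℝ) : AddCircle (1 : ℝ)) = x := by
    intro x
    exact (AddCircle.equivIoc 1 0).symm_apply_apply x
  have hι_coe : ∀ t : ℝ, t ∈ Ioc (0:ℝ) 1 → ι ((t : AddCircle (1:ℝ))) = t := by
    intro t ht
    simp only [hι_def, AddCircle.equivIoc, QuotientAddGroup.equivIocMod_coe]
    exact (toIocMod_eq_self _).mpr (by simpa using ht)
  -- the measure on ℝ
  set ν : Measure ℝ := μ.map ι with hν_def
  haveI hνprob : IsProbabilityMeasure ν := Measure.isProbabilityMeasure_map hι_meas.aemeasurable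
  have hF0 : cdf ν 0 = 0 := by
    have h : ν (Iic 0) = 0 := by
      rw [hν_def, Measure.map_apply hι_meas measurableSet_Iic]
      have : ι ⁻¹' Iic 0 = ∅ := by
        ext x
        simp only [mem_preimage, mem_Iic, mem_empty_iff_false, iff_false, not_le]
        exact (hι_mem x).1
      rw [this, measure_empty]
    have := ofReal_cdf (μ := ν) 0
    rw [h, ENNReal.ofReal_eq_zero] at this
    linarith [cdf_nonneg (μ := ν) 0]
  have hF1 : cdf ν 1 = 1 := by
    have h : ν (Iic 1) = 1 := by
      rw [hν_def, Measure.map_apply hι_meas measurableSet_Iic]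
      have : ι ⁻¹' Iic 1 = univ := by
        ext x
        simp only [mem_preimage, mem_Iic, mem_univ, iff_true]
        exact (hι_mem x).2
      rw [this, measure_univ]
    have := ofReal_cdf (μ := ν) 1
    rw [h] at this
    exact_mod_cast (ENNReal.ofReal_eq_one).mp this
  set G : ℝ → ℝ := Quant ν with hG_def
  have hG_mono : Monotone G := quant_mono ν hF1
  have hG_meas : Measurable G := hG_mono.measurable
  have hG_mem : ∀ {θ}, θ ∈ Ioc (0:ℝ) 1 → G θ ∈ Ioc (0:ℝ) 1 :=
    fun hθ => quant_mem ν hF0 hF1 hθ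
  refine ⟨fun x => ((G (ι x) : ℝ) : AddCircle (1 : ℝ)), ?_, ?_, ?_⟩
  · -- cyclically monotone
    intro x y z hxy hyz hxz
    set a := ι x; set b := ι y; set c := ι z
    have hGab : G a ≠ G b := fun h => hxy (by exact congrArg (fun t : ℝ => (t : AddCircle (1:ℝ))) h)
    have hGbc : G b ≠ G c := fun h => hyz (by exact congrArg (fun t : ℝ => (t : AddCircle (1:ℝ))) h)
    have hGac : G a ≠ G c := fun h => hxz (by exact congrArg (fun t : ℝ => (t : AddCircle (1:ℝ))) h)
    have hab : a ≠ b := fun h => hGab (by rw [h])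
    have hbc : b ≠ c := fun h => hGbc (by rw [h])
    have hac : a ≠ c := fun h => hGac (by rw [h])
    have e1 : sbtw x y z ↔ Cyc a b c := by
      conv_lhs => rw [← hι_sect x, ← hι_sect y, ← hι_sect z]
      exact sbtw_coe_iff (hι_mem x) (hι_mem y) (hι_mem z) hab hbc hac
    have e2 : sbtw ((G a : ℝ) : AddCircle (1:ℝ)) ((G b : ℝ) : AddCircle (1:ℝ))
        ((G c : ℝ) : AddCircle (1:ℝ)) ↔ Cyc (G a) (G b) (G c) :=
      sbtw_coe_iff (hG_mem (hι_mem x)) (hG_mem (hι_mem y)) (hG_mem (hι_mem z)) hGab hGbc hGac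
    show sbtw x y z ↔ sbtw ((G a : ℝ) : AddCircle (1:ℝ)) ((G b : ℝ) : AddCircle (1:ℝ))
      ((G c : ℝ) : AddCircle (1:ℝ))
    rw [e1, e2]
    constructor
    · exact cyc_mono hG_mono hGab hGbc hGac
    · intro h
      by_contra hn
      rcases cyc_total hab hbc hac with h' | h'
      · exact hn h'
      · exact cyc_not_cyc h (cyc_mono hG_mono hGac hGbc.symm hGab h')
  · exact AddCircle.measurable_mk'.comp (hG_meas.comp hι_meas)
  · -- pushforward
    have hmk_meas : Measurable (fun t : ℝ => (t : AddCircle (1:ℝ))) := AddCircle.measurable_mk'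
    have h1 : Measure.map ι volume = volume.restrict (Ioc (0:ℝ) 1) := by
      have hvol : (volume : Measure (AddCircle (1:ℝ))) =
          Measure.map (fun t : ℝ => (t : AddCircle (1:ℝ))) (volume.restrict (Ioc 0 (0+1))) :=
        (AddCircle.measurePreserving_mk 1 0).map_eq.symm
      rw [hvol, Measure.map_map hι_meas hmk_meas]
      rw [zero_add]
      have : (ι ∘ fun t : ℝ => (t : AddCircle (1:ℝ))) =ᵐ[volume.restrict (Ioc (0:ℝ) 1)] id := by
        refine (ae_restrict_iff' measurableSet_Ioc).2 (ae_of_all _ fun t ht => ?_)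
        exact hι_coe t ht
      rw [Measure.map_congr this, Measure.map_id]
    haveI : IsFiniteMeasure (volume.restrict (Ioc (0:ℝ) 1)) :=
      ⟨by simp [Real.volume_Ioc]⟩
    have h2 : Measure.map G (volume.restrict (Ioc (0:ℝ) 1)) = ν := by
      haveI : IsFiniteMeasure (Measure.map G (volume.restrict (Ioc (0:ℝ) 1))) :=
        Measure.isFiniteMeasure_map _ _
      refine Measure.ext_of_Iic _ _ (fun x => ?_)
      rw [Measure.map_apply hG_meas measurableSet_Iic,
        Measure.restrict_apply (hG_meas measurableSet_Iic)]
      have hset : G ⁻¹' Iic x ∩ Ioc (0:ℝ) 1 = Ioc 0 (cdf ν x) := by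
        ext θ
        simp only [mem_inter_iff, mem_preimage, mem_Iic, mem_Ioc]
        constructor
        · rintro ⟨h, hθ1, hθ2⟩
          exact ⟨hθ1, (quant_galois ν hF0 hF1 ⟨hθ1, hθ2⟩ x).mp h⟩
        · rintro ⟨hθ1, hθ2⟩
          have hθ1' : θ ≤ 1 := hθ2.trans (cdf_le_one ν x)
          exact ⟨(quant_galois ν hF0 hF1 ⟨hθ1, hθ1'⟩ x).mpr hθ2, hθ1, hθ1'⟩
      rw [hset, Real.volume_Ioc, sub_zero, ofReal_cdf]
    calc Measure.map (fun x => ((G (ι x) : ℝ) : AddCircle (1 : ℝ))) volume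
        = Measure.map ((fun t : ℝ => (t : AddCircle (1:ℝ))) ∘ G ∘ ι) volume := rfl
      _ = Measure.map ((fun t : ℝ => (t : AddCircle (1:ℝ))) ∘ G) (Measure.map ι volume) :=
          (Measure.map_map (hmk_meas.comp hG_meas) hι_meas).symm
      _ = Measure.map ((fun t : ℝ => (t : AddCircle (1:ℝ))) ∘ G)
            (volume.restrict (Ioc (0:ℝ) 1)) := by rw [h1]
      _ = Measure.map (fun t : ℝ => (t : AddCircle (1:ℝ)))
            (Measure.map G (volume.restrict (Ioc (0:ℝ) 1))) :=
          (Measure.map_map hmk_meas hG_meas).symm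
      _ = Measure.map (fun t : ℝ => (t : AddCircle (1:ℝ))) (μ.map ι) := by rw [h2]
      _ = Measure.map ((fun t : ℝ => (t : AddCircle (1:ℝ))) ∘ ι) μ :=
          Measure.map_map hmk_meas hι_meas
      _ = Measure.map id μ := by
          congr 1
          funext x
          exact hι_sect x
      _ = μ := Measure.map_id
end
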